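/- If K and K' are locally anti-blocking bodies in ℝⁿ, then the convex hull conv(K ∪ K') is locally anti-blocking, with conv(K ∪ K') ∩ σℝ₊ⁿ = conv((K ∩ σℝ₊ⁿ) ∪ (K' ∩ σℝ₊ⁿ)) for each sign vector σ. -/

import Mathlib

open Set MeasureTheory Pointwise
open scoped RealInnerProductSpace

/-- A convex body `K ⊆ ℝ₊ⁿ` (compact, convex, containing `0`) is anti-blocking if
for all `y ∈ K` and `x ∈ ℝ₊ⁿ` with `x ≤ y` coordinatewise, `x ∈ K`. -/
def IsAntiBlocking (n : ℕ) (K : Set (EuclideanSpace ℝ (Fin n))) : Prop :=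
  IsCompact K ∧ Convex ℝ K ∧ (0 : EuclideanSpace ℝ (Fin n)) ∈ K ∧
    (∀ y ∈ K, ∀ i, (0:ℝ) ≤ y i) ∧
    ∀ y ∈ K, ∀ x : EuclideanSpace ℝ (Fin n),
      (∀ i, 0 ≤ x i) → (∀ i, x i ≤ y i) → x ∈ K

/-- Sign vector: each entry is `1` or `-1`. -/
def IsSignVector {n : ℕ} (σ : Fin n → ℝ) : Prop := ∀ i, σ i = 1 ∨ σ i = -1

/-- The closed orthant `σℝ₊ⁿ = {x : σ i * x i ≥ 0 for all i}`. -/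
def orthant {n : ℕ} (σ : Fin n → ℝ) : Set (EuclideanSpace ℝ (Fin n)) :=
  {x | ∀ i, 0 ≤ σ i * x i}

/-- Coordinatewise multiplication by the sign vector `σ`. -/
def sgnMul {n : ℕ} (σ : Fin n → ℝ) (x : EuclideanSpace ℝ (Fin n)) :
    EuclideanSpace ℝ (Fin n) :=
  WithLp.toLp 2 (fun i => σ i * x i)

/-- `K` is locally anti-blocking if `σ (K ∩ σℝ₊ⁿ)` is anti-blocking for every sign
vector `σ ∈ {-1,1}ⁿ`. -/
def IsLocallyAntiBlocking (n : ℕ) (K : Set (EuclideanSpace ℝ (Fin n))) : Prop :=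
  ∀ σ : Fin n → ℝ, IsSignVector σ →
    IsAntiBlocking n (sgnMul σ '' (K ∩ orthant σ))

/-!
Flipping signs, the section of a locally anti-blocking body `K` by an orthant `σℝ₊ⁿ` is an
anti-blocking body, and it contains the `σ`-positive part of every point of `K`. If `K` and `K'`
are convex, a point `z = a x + b y` of `conv (K ∪ K')` lying in `σℝ₊ⁿ` satisfies
`0 ≤ σz ≤ a (σx)⁺ + b (σy)⁺`, and splitting `σz = min (σz) (a (σx)⁺) + rest` writes `σz` as a
convex combination of points of the two sections, by downward closedness. The same splitting
shows that the convex hull of two anti-blocking bodies is downward closed, and, applied with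
`K' = K`, that `K` is convex in the first place.
-/

theorem isCompact_convexJoin {E : Type*} [AddCommGroup E] [Module ℝ E] [TopologicalSpace E]
    [ContinuousAdd E] [ContinuousSMul ℝ E] {s t : Set E} (hs : IsCompact s) (ht : IsCompact t) :
    IsCompact (convexJoin ℝ s t) := by
  have : convexJoin ℝ s t =
      (fun p : ℝ × E × E => (1 - p.1) • p.2.1 + p.1 • p.2.2) '' Icc 0 1 ×ˢ s ×ˢ t := by
    ext x
    simp only [mem_convexJoin, segment_eq_image, mem_image, mem_prod, Prod.exists]
    grind
  rw [this]
  exact (isCompact_Icc.prod (hs.prod ht)).image (by fun_prop)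

section

variable {n : ℕ}

theorem convex_setOf_forall_nonneg :
    Convex ℝ {x : EuclideanSpace ℝ (Fin n) | ∀ i, 0 ≤ x i} := by
  intro x hx y hy a b ha hb _ i
  simpa using add_nonneg (mul_nonneg ha (hx i)) (mul_nonneg hb (hy i))

namespace IsAntiBlocking

variable {S T : Set (EuclideanSpace ℝ (Fin n))}

theorem mem_smul_of_le (hS : IsAntiBlocking n S) {a u : EuclideanSpace ℝ (Fin n)} (ha : a ∈ S)
    {t : ℝ} (ht : 0 ≤ t) (hu₀ : ∀ i, 0 ≤ u i) (hu : ∀ i, u i ≤ t * a i) : u ∈ t • S := by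
  rcases ht.eq_or_lt with rfl | ht
  · have hu' : u = 0 := by
      ext i
      exact le_antisymm ((hu i).trans_eq (zero_mul _)) (hu₀ i)
    simpa [hu'] using smul_mem_smul_set (s := S) (a := (0 : ℝ)) ha
  · rw [mem_smul_set_iff_inv_smul_mem₀ ht.ne']
    refine hS.2.2.2.2 a ha _ (fun i => ?_) (fun i => ?_)
    · simpa using mul_nonneg (inv_nonneg.2 ht.le) (hu₀ i)
    · simpa [inv_mul_le_iff₀ ht] using hu i

theorem mem_convexHull_union_of_le (hS : IsAntiBlocking n S) (hT : IsAntiBlocking n T)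
    {a b z : EuclideanSpace ℝ (Fin n)} (ha : a ∈ S) (hb : b ∈ T) {l m : ℝ} (hl : 0 ≤ l)
    (hm : 0 ≤ m) (hlm : l + m = 1) (hz₀ : ∀ i, 0 ≤ z i) (hz : ∀ i, z i ≤ l * a i + m * b i) :
    z ∈ convexHull ℝ (S ∪ T) := by
  set u : EuclideanSpace ℝ (Fin n) := WithLp.toLp 2 fun i => min (z i) (l * a i)
  have hu : u ∈ l • S := hS.mem_smul_of_le ha hl
    (fun i => le_min (hz₀ i) (mul_nonneg hl (hS.2.2.2.1 a ha i))) (fun i => min_le_right _ _)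
  have hv : z - u ∈ m • T := hT.mem_smul_of_le hb hm
    (fun i => by simp [u]) (fun i => by
      have := mul_nonneg hm (hT.2.2.2.1 b hb i)
      have := hz i
      simp only [u, PiLp.sub_apply, min_def]
      split_ifs <;> linarith)
  obtain ⟨a', ha', hua⟩ := hu
  obtain ⟨b', hb', hvb⟩ := hv
  rw [← add_sub_cancel u z, ← hvb, ← hua]
  exact convex_convexHull ℝ (S ∪ T) (subset_convexHull ℝ _ (Or.inl ha'))
    (subset_convexHull ℝ _ (Or.inr hb')) hl hm hlm

theorem convexHull_union (hS : IsAntiBlocking n S) (hT : IsAntiBlocking n T) :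
    IsAntiBlocking n (convexHull ℝ (S ∪ T)) := by
  have hjoin := hS.2.1.convexHull_union hT.2.1 ⟨0, hS.2.2.1⟩ ⟨0, hT.2.2.1⟩
  refine ⟨hjoin ▸ isCompact_convexJoin hS.1 hT.1, convex_convexHull ℝ _,
    subset_convexHull ℝ _ (Or.inl hS.2.2.1),
    fun y hy => convexHull_min (union_subset hS.2.2.2.1 hT.2.2.2.1) convex_setOf_forall_nonneg hy,
    ?_⟩
  rintro y hy x hx₀ hxy
  rw [hjoin] at hy
  obtain ⟨a, ha, b, hb, l, m, hl, hm, hlm, rfl⟩ := mem_convexJoin.1 hy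
  exact mem_convexHull_union_of_le hS hT ha hb hl hm hlm hx₀ (by simpa using hxy)

end IsAntiBlocking

theorem IsSignVector.mul_self {σ : Fin n → ℝ} (hσ : IsSignVector σ) (i : Fin n) :
    σ i * σ i = 1 := by
  rcases hσ i with h | h <;> simp [h]

theorem exists_isSignVector_mem_orthant (x : EuclideanSpace ℝ (Fin n)) :
    ∃ σ, IsSignVector σ ∧ x ∈ orthant σ := by
  refine ⟨fun i => if 0 ≤ x i then 1 else -1, fun i => ?_, fun i => ?_⟩ <;>
    by_cases h : 0 ≤ x i <;> simp [h]
  linarith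

@[simp]
theorem sgnMul_apply (σ : Fin n → ℝ) (x : EuclideanSpace ℝ (Fin n)) (i : Fin n) :
    sgnMul σ x i = σ i * x i := rfl

theorem isLinearMap_sgnMul (σ : Fin n → ℝ) : IsLinearMap ℝ (sgnMul σ) :=
  ⟨fun x y => by ext; simp [mul_add], fun c x => by ext; simp [mul_left_comm]⟩

theorem IsSignVector.sgnMul_involutive {σ : Fin n → ℝ} (hσ : IsSignVector σ) :
    Function.Involutive (sgnMul σ) := fun x => by
  ext i
  simp [← mul_assoc, hσ.mul_self]

theorem convex_orthant (σ : Fin n → ℝ) : Convex ℝ (orthant σ) :=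
  convex_setOf_forall_nonneg.is_linear_preimage (isLinearMap_sgnMul σ)

theorem IsSignVector.mem_sgnMul_image_iff {σ : Fin n → ℝ} (hσ : IsSignVector σ)
    {K : Set (EuclideanSpace ℝ (Fin n))} {x : EuclideanSpace ℝ (Fin n)} :
    x ∈ sgnMul σ '' (K ∩ orthant σ) ↔ (∀ i, 0 ≤ x i) ∧ sgnMul σ x ∈ K := by
  rw [image_eq_preimage_of_inverse hσ.sgnMul_involutive.leftInverse
    hσ.sgnMul_involutive.rightInverse]
  simp [orthant, ← mul_assoc, hσ.mul_self, and_comm]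

namespace IsLocallyAntiBlocking

variable {K K' : Set (EuclideanSpace ℝ (Fin n))}

theorem zero_mem (hK : IsLocallyAntiBlocking n K) : 0 ∈ K := by
  have hσ : IsSignVector (fun _ : Fin n => (1 : ℝ)) := fun _ => Or.inl rfl
  simpa [(isLinearMap_sgnMul _).map_zero] using (hσ.mem_sgnMul_image_iff.1 (hK _ hσ).2.2.1).2

theorem mem_of_forall_mem_uIcc (hK : IsLocallyAntiBlocking n K)
    {x y : EuclideanSpace ℝ (Fin n)} (hx : x ∈ K) (hy : ∀ i, y i ∈ uIcc 0 (x i)) : y ∈ K := by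
  obtain ⟨σ, hσ, hxσ⟩ := exists_isSignVector_mem_orthant x
  have hσy : ∀ i, 0 ≤ σ i * y i ∧ σ i * y i ≤ σ i * x i := fun i => by
    have hyi := hy i
    have hxi := hxσ i
    rcases hσ i with h | h <;> simp only [h, one_mul, neg_one_mul, neg_nonneg] at hxi ⊢
    · rw [uIcc_of_le hxi] at hyi
      constructor <;> linarith [hyi.1, hyi.2]
    · rw [uIcc_of_ge hxi] at hyi
      constructor <;> linarith [hyi.1, hyi.2]
  have := (hK σ hσ).2.2.2.2 (sgnMul σ x) ⟨x, ⟨hx, hxσ⟩, rfl⟩ (sgnMul σ y)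
    (fun i => (hσy i).1) (fun i => (hσy i).2)
  exact (hσ.sgnMul_involutive.injective.mem_set_image.1 this).1

theorem posPart_mem (hK : IsLocallyAntiBlocking n K) {σ : Fin n → ℝ} (hσ : IsSignVector σ)
    {x : EuclideanSpace ℝ (Fin n)} (hx : x ∈ K) :
    WithLp.toLp 2 (fun i => max (σ i * x i) 0) ∈ sgnMul σ '' (K ∩ orthant σ) := by
  refine hσ.mem_sgnMul_image_iff.2 ⟨fun i => le_max_right _ _,
    hK.mem_of_forall_mem_uIcc hx fun i => ?_⟩
  rcases hσ i with h | h <;> rcases le_total 0 (x i) with hx | hx <;> simp [h, hx]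

theorem sgnMul_mem_convexHull_union (hK : IsLocallyAntiBlocking n K)
    (hK' : IsLocallyAntiBlocking n K') {σ : Fin n → ℝ} (hσ : IsSignVector σ)
    {x y : EuclideanSpace ℝ (Fin n)} (hx : x ∈ K) (hy : y ∈ K') {a b : ℝ} (ha : 0 ≤ a)
    (hb : 0 ≤ b) (hab : a + b = 1) (hz : a • x + b • y ∈ orthant σ) :
    sgnMul σ (a • x + b • y) ∈
      convexHull ℝ (sgnMul σ '' (K ∩ orthant σ) ∪ sgnMul σ '' (K' ∩ orthant σ)) :=
  (hK σ hσ).mem_convexHull_union_of_le (hK' σ hσ) (hK.posPart_mem hσ hx)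
    (hK'.posPart_mem hσ hy) ha hb hab hz fun i => by
      simp only [sgnMul_apply, PiLp.add_apply, PiLp.smul_apply, smul_eq_mul, mul_add,
        mul_left_comm (σ i)]
      gcongr <;> exact le_max_left _ _

theorem convex (hK : IsLocallyAntiBlocking n K) : Convex ℝ K := by
  intro x hx y hy a b ha hb hab
  obtain ⟨σ, hσ, hz⟩ := exists_isSignVector_mem_orthant (a • x + b • y)
  have := hK.sgnMul_mem_convexHull_union hK hσ hx hy ha hb hab hz
  rw [union_self, (hK σ hσ).2.1.convexHull_eq] at this
  exact (hσ.sgnMul_involutive.injective.mem_set_image.1 this).1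

theorem convexHull_union_inter_orthant (hK : IsLocallyAntiBlocking n K)
    (hK' : IsLocallyAntiBlocking n K') {σ : Fin n → ℝ} (hσ : IsSignVector σ) :
    convexHull ℝ (K ∪ K') ∩ orthant σ = convexHull ℝ ((K ∩ orthant σ) ∪ (K' ∩ orthant σ)) := by
  refine Subset.antisymm ?_ (subset_inter
    (convexHull_mono (union_subset_union inter_subset_left inter_subset_left))
    (convexHull_min (union_subset inter_subset_right inter_subset_right) (convex_orthant σ)))
  rintro z ⟨hz, hzσ⟩
  rw [hK.convex.convexHull_union hK'.convex ⟨0, hK.zero_mem⟩ ⟨0, hK'.zero_mem⟩] at hz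
  obtain ⟨x, hx, y, hy, a, b, ha, hb, hab, rfl⟩ := mem_convexJoin.1 hz
  have := hK.sgnMul_mem_convexHull_union hK' hσ hx hy ha hb hab hzσ
  rwa [← image_union, ← (isLinearMap_sgnMul σ).image_convexHull,
    hσ.sgnMul_involutive.injective.mem_set_image] at this

end IsLocallyAntiBlocking

end

theorem locallyAntiBlocking_convexHull_union {n : ℕ}
    {K K' : Set (EuclideanSpace ℝ (Fin n))}
    (hK : IsLocallyAntiBlocking n K) (hK' : IsLocallyAntiBlocking n K') :
    IsLocallyAntiBlocking n (convexHull ℝ (K ∪ K')) ∧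
      ∀ σ : Fin n → ℝ, IsSignVector σ →
        convexHull ℝ (K ∪ K') ∩ orthant σ =
          convexHull ℝ ((K ∩ orthant σ) ∪ (K' ∩ orthant σ)) := by
  refine ⟨fun σ hσ => ?_, fun σ hσ => hK.convexHull_union_inter_orthant hK' hσ⟩
  rw [hK.convexHull_union_inter_orthant hK' hσ, (isLinearMap_sgnMul σ).image_convexHull,
    image_union]
  exact (hK σ hσ).convexHull_union (hK' σ hσ)
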